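/- Let Ω be the open unit cube in ℝⁿ (n ≥ 2), let z₀ be the center point of Ω, and let 1 ≤ s < ∞. Then ∫_Ω k(z, z₀; Ω)^s dz ≤ (4√n)^s · n · Σ_{j=0}^{∞} (j+1)^s (1/3)^j; in particular, this series converges and ∫_Ω k(z, z₀; Ω)^s dz < ∞ for all s ≥ 1. -/

import Mathlib

open MeasureTheory Metric Set
open scoped ENNReal

/-- The quasihyperbolic distance `k(z, z₀; Ω)`: the infimum, over all Lipschitz curves
`γ : [0,1] → Ω` joining `z` to `z₀`, of `∫ ‖γ'(t)‖ / d(γ(t), ∂Ω) dt`. -/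
noncomputable def qhDist {n : ℕ} (Ω : Set (EuclideanSpace ℝ (Fin n)))
    (z z₀ : EuclideanSpace ℝ (Fin n)) : ℝ :=
  sInf {L : ℝ | ∃ γ : ℝ → EuclideanSpace ℝ (Fin n),
    (∃ K : NNReal, LipschitzWith K γ) ∧ γ 0 = z ∧ γ 1 = z₀ ∧
    (∀ t ∈ Set.Icc (0:ℝ) 1, γ t ∈ Ω) ∧
    L = ∫ t in (0:ℝ)..1, ‖deriv γ t‖ / Metric.infDist (γ t) (frontier Ω)}

/-!
Let `δ(z)` be the sup-norm distance from `z` to the boundary of the cube. It is a minimum of affine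
functions, hence concave, and equals `1/2` at the centre, so along the segment from `z` to the centre
the distance to the boundary is at least `(t + 2δ(z))/4`; integrating this along the segment gives
`k(z, z₀) ≤ 2√n log(1 + 1/(2δ(z)))`. On the shell `3^{-(j+1)} < 2δ ≤ 3^{-j}`, which has volume at
most `n 3^{-j}`, this is at most `4√n (j+1)`, and summing over the shells gives the bound.
-/

open AffineMap

section QuasihyperbolicDistance

variable {n : ℕ} {Ω : Set (EuclideanSpace ℝ (Fin n))} {z w : EuclideanSpace ℝ (Fin n)}

lemma integral_norm_deriv_div_infDist_nonneg (γ : ℝ → EuclideanSpace ℝ (Fin n)) :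
    0 ≤ ∫ t in (0:ℝ)..1, ‖deriv γ t‖ / infDist (γ t) (frontier Ω) :=
  intervalIntegral.integral_nonneg zero_le_one fun _ _ => div_nonneg (norm_nonneg _) infDist_nonneg

lemma qhDist_nonneg : 0 ≤ qhDist Ω z w :=
  Real.sInf_nonneg <| by
    rintro _ ⟨γ, -, -, -, -, rfl⟩
    exact integral_norm_deriv_div_infDist_nonneg γ

lemma qhDist_le_integral {γ : ℝ → EuclideanSpace ℝ (Fin n)} {K : NNReal}
    (hγ : LipschitzWith K γ) (h₀ : γ 0 = z) (h₁ : γ 1 = w) (hΩ : ∀ t ∈ Icc (0:ℝ) 1, γ t ∈ Ω) :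
    qhDist Ω z w ≤ ∫ t in (0:ℝ)..1, ‖deriv γ t‖ / infDist (γ t) (frontier Ω) := by
  refine csInf_le ⟨0, ?_⟩ ⟨γ, ⟨K, hγ⟩, h₀, h₁, hΩ, rfl⟩
  rintro _ ⟨γ, -, -, -, -, rfl⟩
  exact integral_norm_deriv_div_infDist_nonneg γ

lemma qhDist_le_integral_segment (hΩ : ∀ t ∈ Icc (0:ℝ) 1, lineMap z w t ∈ Ω) :
    qhDist Ω z w ≤ ∫ t in (0:ℝ)..1, ‖w - z‖ / infDist (lineMap z w t) (frontier Ω) := by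
  have hlip : LipschitzWith (nndist z w) (lineMap z w : ℝ → EuclideanSpace ℝ (Fin n)) :=
    .of_dist_le_mul fun s t => by rw [dist_lineMap_lineMap, mul_comm, coe_nndist]
  simpa only [hasDerivAt_lineMap.deriv] using
    qhDist_le_integral hlip (lineMap_apply_zero z w) (lineMap_apply_one z w) hΩ

end QuasihyperbolicDistance

lemma le_infDist_frontier_of_ball_subset {X : Type*} [PseudoMetricSpace X] {Ω : Set X} {x : X}
    {r : ℝ} (hΩ : IsOpen Ω) (hfr : (frontier Ω).Nonempty) (hball : ball x r ⊆ Ω) :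
    r ≤ infDist x (frontier Ω) :=
  (le_infDist hfr).2 fun _ hy =>
    not_lt.1 fun hlt => (hΩ.frontier_eq ▸ hy).2 (hball (mem_ball'.2 hlt))

lemma EuclideanSpace.norm_le_sqrt_card_mul {ι : Type*} [Fintype ι] {x : EuclideanSpace ℝ ι} {r : ℝ}
    (hr : 0 ≤ r) (hx : ∀ i, |x i| ≤ r) : ‖x‖ ≤ √(Fintype.card ι) * r := by
  rw [EuclideanSpace.norm_eq, ← Real.sqrt_sq hr, ← Real.sqrt_mul (Nat.cast_nonneg _)]
  refine Real.sqrt_le_sqrt ?_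
  calc ∑ i, ‖x i‖ ^ 2 ≤ ∑ _i : ι, r ^ 2 :=
        Finset.sum_le_sum fun i _ => by
          simpa only [Real.norm_eq_abs, sq_abs] using pow_le_pow_left₀ (abs_nonneg _) (hx i) 2
    _ = Fintype.card ι * r ^ 2 := by simp

lemma summable_add_one_rpow_mul_geometric (s : ℝ) {r : ℝ} (hr₀ : 0 < r) (hr₁ : r < 1) :
    Summable fun j : ℕ => ((j : ℝ) + 1) ^ s * r ^ j := by
  have hgeom : Summable fun j : ℕ => ((j : ℝ) ^ ⌈s⌉₊ * r ^ j) :=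
    summable_pow_mul_geometric_of_norm_lt_one ⌈s⌉₊ (by rwa [Real.norm_of_nonneg hr₀.le])
  have hshift : Summable fun j : ℕ => r⁻¹ * (((j + 1 : ℕ) : ℝ) ^ ⌈s⌉₊ * r ^ (j + 1)) :=
    ((summable_nat_add_iff 1).2 hgeom).mul_left r⁻¹
  refine hshift.of_nonneg_of_le (fun j => by positivity) fun j => ?_
  calc ((j : ℝ) + 1) ^ s * r ^ j ≤ ((j : ℝ) + 1) ^ (⌈s⌉₊ : ℝ) * r ^ j := by
        gcongr
        · exact le_add_of_nonneg_left j.cast_nonneg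
        · exact Nat.le_ceil s
    _ = r⁻¹ * (((j + 1 : ℕ) : ℝ) ^ ⌈s⌉₊ * r ^ (j + 1)) := by
        rw [Real.rpow_natCast, pow_succ]; push_cast; field_simp

section UnitCube

variable {ι : Type*}

def unitCube (ι : Type*) : Set (EuclideanSpace ℝ ι) := {z | ∀ i, 0 < z i ∧ z i < 1}

noncomputable def cubeDepth (z : EuclideanSpace ℝ ι) : ℝ := ⨅ i, min (z i) (1 - z i)

lemma cubeDepth_center [Nonempty ι] :
    cubeDepth (WithLp.toLp 2 fun _ : ι => (1 / 2 : ℝ)) = 1 / 2 := by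
  norm_num [cubeDepth]

variable [Fintype ι]

lemma EuclideanSpace.volume_preimage_ofLp_pi {S : ι → Set ℝ} (hS : ∀ k, MeasurableSet (S k)) :
    volume (WithLp.ofLp ⁻¹' univ.pi S : Set (EuclideanSpace ℝ ι)) = ∏ k, volume (S k) := by
  rw [(PiLp.volume_preserving_ofLp ι).measure_preimage
    (MeasurableSet.univ_pi hS).nullMeasurableSet, volume_pi_pi]

lemma isOpen_unitCube : IsOpen (unitCube ι) := by
  have h : unitCube ι = WithLp.ofLp ⁻¹' univ.pi fun _ => Ioo 0 1 := by ext; simp [unitCube]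
  exact h ▸ (isOpen_set_pi finite_univ fun _ _ => isOpen_Ioo).preimage (PiLp.continuous_ofLp 2 _)

lemma cubeDepth_le (z : EuclideanSpace ℝ ι) (i : ι) : cubeDepth z ≤ min (z i) (1 - z i) :=
  ciInf_le (Finite.bddBelow_range _) i

lemma ball_cubeDepth_subset (z : EuclideanSpace ℝ ι) : ball z (cubeDepth z) ⊆ unitCube ι := by
  intro y hy i
  have hyz : |y i - z i| < cubeDepth z := (PiLp.dist_apply_le y z i).trans_lt hy
  have hzi := cubeDepth_le z i
  rw [abs_lt] at hyz
  constructor <;> linarith [min_le_left (z i) (1 - z i), min_le_right (z i) (1 - z i)]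

variable [Nonempty ι]

lemma cubeDepth_pos {z : EuclideanSpace ℝ ι} (hz : z ∈ unitCube ι) : 0 < cubeDepth z := by
  obtain ⟨i, hi⟩ := exists_eq_ciInf_of_finite (f := fun i => min (z i) (1 - z i))
  rw [cubeDepth, ← hi]
  exact lt_min (hz i).1 (sub_pos.2 (hz i).2)

lemma cubeDepth_le_half (z : EuclideanSpace ℝ ι) : cubeDepth z ≤ 1 / 2 := by
  obtain ⟨i⟩ := ‹Nonempty ι›
  linarith [cubeDepth_le z i, min_le_left (z i) (1 - z i), min_le_right (z i) (1 - z i)]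

lemma cubeDepth_lineMap_ge (z w : EuclideanSpace ℝ ι) {t : ℝ} (ht : t ∈ Icc (0 : ℝ) 1) :
    (1 - t) * cubeDepth z + t * cubeDepth w ≤ cubeDepth (lineMap z w t) := by
  refine le_ciInf fun i => ?_
  have hz := cubeDepth_le z i
  have hw := cubeDepth_le w i
  simp only [lineMap_apply_module, PiLp.add_apply, PiLp.smul_apply, smul_eq_mul]
  have h₀ : 0 ≤ 1 - t := sub_nonneg.2 ht.2
  refine le_min ?_ ?_ <;> nlinarith [min_le_left (z i) (1 - z i), min_le_right (z i) (1 - z i),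
    min_le_left (w i) (1 - w i), min_le_right (w i) (1 - w i), ht.1]

lemma cubeDepth_lineMap_center_ge {z : EuclideanSpace ℝ ι} (hz : z ∈ unitCube ι) {t : ℝ}
    (ht : t ∈ Icc (0 : ℝ) 1) :
    (t + 2 * cubeDepth z) / 4 ≤ cubeDepth (lineMap z (WithLp.toLp 2 fun _ => 1 / 2) t) := by
  have h := cubeDepth_lineMap_ge z (WithLp.toLp 2 fun _ => 1 / 2) ht
  rw [cubeDepth_center] at h
  nlinarith [mul_nonneg (sub_nonneg.2 ht.2) (cubeDepth_pos hz).le,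
    mul_nonneg ht.1 (sub_nonneg.2 (cubeDepth_le_half z))]

lemma frontier_unitCube_nonempty : (frontier (unitCube ι)).Nonempty := by
  refine nonempty_frontier_iff.2 ⟨⟨WithLp.toLp 2 fun _ => 1 / 2, fun _ => by norm_num⟩, ?_⟩
  intro h
  have h0 : (0 : EuclideanSpace ℝ ι) ∈ unitCube ι := h ▸ mem_univ _
  exact (h0 (Classical.arbitrary ι)).1.false

lemma cubeDepth_le_infDist_frontier (z : EuclideanSpace ℝ ι) :
    cubeDepth z ≤ infDist z (frontier (unitCube ι)) :=
  le_infDist_frontier_of_ball_subset isOpen_unitCube frontier_unitCube_nonempty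
    (ball_cubeDepth_subset z)

lemma volume_setOf_cubeDepth_le {ε : ℝ} (hε : 0 ≤ ε) :
    volume {z ∈ unitCube ι | 2 * cubeDepth z ≤ ε} ≤ Fintype.card ι * ENNReal.ofReal ε := by
  classical
  set slab : ι → ι → Set ℝ := fun i k =>
    if k = i then Icc 0 (ε / 2) ∪ Icc (1 - ε / 2) 1 else Icc 0 1
  set box : ι → Set (EuclideanSpace ℝ ι) := fun i => WithLp.ofLp ⁻¹' univ.pi (slab i)
  have hcover : {z ∈ unitCube ι | 2 * cubeDepth z ≤ ε} ⊆ ⋃ i, box i := by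
    rintro z ⟨hz, hzε⟩
    obtain ⟨i, hi⟩ := exists_eq_ciInf_of_finite (f := fun i => min (z i) (1 - z i))
    refine mem_iUnion.2 ⟨i, fun k _ => ?_⟩
    have hmin : min (z i) (1 - z i) ≤ ε / 2 := by rw [hi]; exact (le_div_iff₀' two_pos).2 hzε
    by_cases hk : k = i
    · subst hk
      simp only [slab, if_pos rfl]
      rcases min_choice (z k) (1 - z k) with h | h <;> rw [h] at hmin
      · exact .inl ⟨(hz k).1.le, hmin⟩
      · exact .inr ⟨by linarith, (hz k).2.le⟩
    · simp only [slab, if_neg hk]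
      exact ⟨(hz k).1.le, (hz k).2.le⟩
  have hbox : ∀ i, volume (box i) ≤ ENNReal.ofReal ε := by
    intro i
    rw [EuclideanSpace.volume_preimage_ofLp_pi fun k => by
      by_cases hk : k = i <;> simp [slab, hk, measurableSet_Icc]]
    calc ∏ k, volume (slab i k) = volume (Icc 0 (ε / 2) ∪ Icc (1 - ε / 2) (1 : ℝ)) := by
          simp [slab, apply_ite, Finset.prod_ite_eq']
      _ ≤ volume (Icc 0 (ε / 2)) + volume (Icc (1 - ε / 2) (1 : ℝ)) := measure_union_le _ _
      _ = ENNReal.ofReal ε := by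
          rw [Real.volume_Icc, Real.volume_Icc, ← ENNReal.ofReal_add (by linarith)
            (by linarith)]
          congr 1
          ring
  calc volume {z ∈ unitCube ι | 2 * cubeDepth z ≤ ε}
      ≤ ∑ i, volume (box i) := (measure_mono hcover).trans (measure_iUnion_fintype_le _ _)
    _ ≤ ∑ _i : ι, ENNReal.ofReal ε := Finset.sum_le_sum fun i _ => hbox i
    _ = Fintype.card ι * ENNReal.ofReal ε := by simp

end UnitCube

lemma setLIntegral_le_tsum_mul_of_subset_iUnion {α β : Type*} [MeasurableSpace α] [Countable β]
    {μ : Measure α} {f : α → ℝ≥0∞} {s : Set α} {S : β → Set α} {a : β → ℝ≥0∞}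
    (hs : s ⊆ ⋃ j, S j) (hf : ∀ j, ∀ x ∈ S j, f x ≤ a j) :
    ∫⁻ x in s, f x ∂μ ≤ ∑' j, a j * μ (S j) :=
  calc ∫⁻ x in s, f x ∂μ ≤ ∫⁻ x in ⋃ j, S j, f x ∂μ := lintegral_mono_set hs
    _ ≤ ∑' j, ∫⁻ x in S j, f x ∂μ := lintegral_iUnion_le _ _
    _ ≤ ∑' j, a j * μ (S j) := ENNReal.tsum_le_tsum fun j =>
      (setLIntegral_mono measurable_const (hf j)).trans_eq (setLIntegral_const _ _)

lemma integral_inv_add_of_pos {a : ℝ} (ha : 0 < a) :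
    ∫ t in (0 : ℝ)..1, (t + a)⁻¹ = Real.log ((1 + a) / a) := by
  rw [intervalIntegral.integral_comp_add_right (fun x => x⁻¹), zero_add,
    integral_inv_of_pos ha (by positivity)]

section CubeCenter

variable {n : ℕ} [NeZero n] {z : EuclideanSpace ℝ (Fin n)}

lemma qhDist_unitCube_center_le (hz : z ∈ unitCube (Fin n)) :
    qhDist (unitCube (Fin n)) z (WithLp.toLp 2 fun _ => 1 / 2) ≤
      2 * √n * Real.log ((1 + 2 * cubeDepth z) / (2 * cubeDepth z)) := by
  set c : EuclideanSpace ℝ (Fin n) := WithLp.toLp 2 fun _ => 1 / 2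
  set δ := cubeDepth z
  have hδ : 0 < δ := cubeDepth_pos hz
  have hdepth : ∀ t ∈ Icc (0 : ℝ) 1, (t + 2 * δ) / 4 ≤ cubeDepth (lineMap z c t) :=
    fun t ht => cubeDepth_lineMap_center_ge hz ht
  have hpos : ∀ t ∈ Icc (0 : ℝ) 1, 0 < (t + 2 * δ) / 4 := fun t ht => by linarith [ht.1]
  have hdist : ∀ t ∈ Icc (0 : ℝ) 1,
      (t + 2 * δ) / 4 ≤ infDist (lineMap z c t) (frontier (unitCube (Fin n))) :=
    fun t ht => (hdepth t ht).trans (cubeDepth_le_infDist_frontier _)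
  have hnorm : ‖c - z‖ ≤ √n * (1 / 2) := by
    simpa using EuclideanSpace.norm_le_sqrt_card_mul (x := c - z) (by norm_num) fun i => by
      simp only [c, PiLp.sub_apply]
      exact abs_le.2 ⟨by linarith [(hz i).2], by linarith [(hz i).1]⟩
  have hcont : Continuous fun t : ℝ => infDist (lineMap z c t) (frontier (unitCube (Fin n))) :=
    (continuous_infDist_pt _).comp lineMap_continuous
  calc qhDist (unitCube (Fin n)) z c
      ≤ ∫ t in (0 : ℝ)..1, ‖c - z‖ / infDist (lineMap z c t) (frontier (unitCube (Fin n))) :=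
        qhDist_le_integral_segment fun t ht =>
          ball_cubeDepth_subset _ (mem_ball_self ((hpos t ht).trans_le (hdepth t ht)))
    _ ≤ ∫ t in (0 : ℝ)..1, 2 * √n * (t + 2 * δ)⁻¹ := by
        refine intervalIntegral.integral_mono_on zero_le_one ?_ ?_ fun t ht => ?_
        · refine (continuousOn_const.div hcont.continuousOn fun t ht => ?_).intervalIntegrable
          rw [uIcc_of_le zero_le_one] at ht
          exact ((hpos t ht).trans_le (hdist t ht)).ne'
        · refine (continuousOn_const.mul ((continuousOn_id.add continuousOn_const).inv₀
            fun t ht => ?_)).intervalIntegrable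
          rw [uIcc_of_le zero_le_one] at ht
          exact (by linarith [ht.1] : 0 < t + 2 * δ).ne'
        · calc ‖c - z‖ / infDist (lineMap z c t) (frontier (unitCube (Fin n)))
              ≤ √n * (1 / 2) / ((t + 2 * δ) / 4) :=
                div_le_div₀ (by positivity) hnorm (hpos t ht) (hdist t ht)
            _ = 2 * √n * (t + 2 * δ)⁻¹ := by field_simp; ring
    _ = 2 * √n * Real.log ((1 + 2 * δ) / (2 * δ)) := by
        rw [intervalIntegral.integral_const_mul, integral_inv_add_of_pos (by positivity)]

lemma qhDist_unitCube_center_le_of_pow_lt (hz : z ∈ unitCube (Fin n)) {j : ℕ}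
    (hj : (1 / 3 : ℝ) ^ (j + 1) < 2 * cubeDepth z) :
    qhDist (unitCube (Fin n)) z (WithLp.toLp 2 fun _ => 1 / 2) ≤ 4 * √n * (j + 1) := by
  have hδ : 0 < 2 * cubeDepth z := by linarith [cubeDepth_pos hz]
  have hratio : (1 + 2 * cubeDepth z) / (2 * cubeDepth z) ≤ 4 ^ (j + 1) :=
    calc (1 + 2 * cubeDepth z) / (2 * cubeDepth z) = 1 ^ (j + 1) + 1 / (2 * cubeDepth z) := by
          rw [one_pow, add_div, div_self hδ.ne', add_comm]
      _ ≤ 1 ^ (j + 1) + 3 ^ (j + 1) := by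
          gcongr
          simpa using one_div_le_one_div_of_le (by positivity) hj.le
      _ ≤ 4 ^ (j + 1) :=
          (pow_add_pow_le zero_le_one (by norm_num) j.succ_ne_zero).trans_eq (by norm_num)
  have hlog4 : Real.log 4 ≤ 2 := by
    have h2 := Real.log_le_sub_one_of_pos (by norm_num : (0 : ℝ) < 2)
    rw [show (4 : ℝ) = 2 ^ 2 by norm_num, Real.log_pow]
    push_cast
    linarith
  calc qhDist (unitCube (Fin n)) z (WithLp.toLp 2 fun _ => 1 / 2)
      ≤ 2 * √n * Real.log ((1 + 2 * cubeDepth z) / (2 * cubeDepth z)) :=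
        qhDist_unitCube_center_le hz
    _ ≤ 2 * √n * Real.log (4 ^ (j + 1)) := by gcongr
    _ = 2 * √n * (j + 1) * Real.log 4 := by rw [Real.log_pow]; push_cast; ring
    _ ≤ 4 * √n * (j + 1) := by
        have : 0 ≤ 2 * √n * (j + 1) := by positivity
        nlinarith

end CubeCenter

/-- For the open unit cube with base point its center, the
`L^s`-integral of the quasihyperbolic distance is bounded by
`(4√n)^s · n · Σ (j+1)^s (1/3)^j`; in particular the series converges and the
integral is finite. -/
theorem cube_qh_integral_bound (n : ℕ) (hn : 2 ≤ n) (s : ℝ) (hs : 1 ≤ s) :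
    (∫⁻ z in {z : EuclideanSpace ℝ (Fin n) | ∀ i, 0 < z i ∧ z i < 1},
        ENNReal.ofReal (qhDist {z : EuclideanSpace ℝ (Fin n) | ∀ i, 0 < z i ∧ z i < 1}
          z (WithLp.toLp 2 (fun _ => (1/2 : ℝ))) ^ s)) ≤
      ENNReal.ofReal ((4 * Real.sqrt n) ^ s * n *
        ∑' j : ℕ, (j+1 : ℝ) ^ s * (1/3 : ℝ) ^ j) ∧
    Summable (fun j : ℕ => (j+1 : ℝ) ^ s * (1/3 : ℝ) ^ j) ∧
    (∫⁻ z in {z : EuclideanSpace ℝ (Fin n) | ∀ i, 0 < z i ∧ z i < 1},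
        ENNReal.ofReal (qhDist {z : EuclideanSpace ℝ (Fin n) | ∀ i, 0 < z i ∧ z i < 1}
          z (WithLp.toLp 2 (fun _ => (1/2 : ℝ))) ^ s)) < ⊤ := by
  have : NeZero n := ⟨by omega⟩
  have hsum := summable_add_one_rpow_mul_geometric s (r := 1 / 3) (by norm_num) (by norm_num)
  set shell : ℕ → Set (EuclideanSpace ℝ (Fin n)) := fun j =>
    {z ∈ unitCube (Fin n) | (1 / 3 : ℝ) ^ (j + 1) < 2 * cubeDepth z ∧ 2 * cubeDepth z ≤ (1 / 3) ^ j}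
  have hcover : unitCube (Fin n) ⊆ ⋃ j, shell j := fun z hz => by
    obtain ⟨j, hj⟩ := exists_nat_pow_near_of_lt_one (x := 2 * cubeDepth z)
      (by linarith [cubeDepth_pos hz])
      (by linarith [cubeDepth_le_half z]) (by norm_num : (0 : ℝ) < 1 / 3) (by norm_num)
    exact mem_iUnion.2 ⟨j, hz, hj⟩
  have hvol : ∀ j, volume (shell j) ≤ ENNReal.ofReal (n * (1 / 3 : ℝ) ^ j) := fun j => by
    rw [ENNReal.ofReal_mul (Nat.cast_nonneg n), ENNReal.ofReal_natCast]
    simpa using (measure_mono (t := {z ∈ unitCube (Fin n) | 2 * cubeDepth z ≤ (1 / 3) ^ j})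
      fun z hz => ⟨hz.1, hz.2.2⟩).trans (volume_setOf_cubeDepth_le (by positivity))
  have hbound : ∫⁻ z in unitCube (Fin n),
      ENNReal.ofReal (qhDist (unitCube (Fin n)) z (WithLp.toLp 2 fun _ => 1 / 2) ^ s) ≤
        ∑' j : ℕ, ENNReal.ofReal ((4 * √n) ^ s * n * ((j + 1 : ℝ) ^ s * (1 / 3 : ℝ) ^ j)) := by
    refine (setLIntegral_le_tsum_mul_of_subset_iUnion hcover fun j z hz =>
      ENNReal.ofReal_le_ofReal (Real.rpow_le_rpow qhDist_nonneg
        (qhDist_unitCube_center_le_of_pow_lt hz.1 hz.2.1) (by linarith))).trans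
      (ENNReal.tsum_le_tsum fun j => (mul_le_mul' le_rfl (hvol j)).trans_eq ?_)
    rw [← ENNReal.ofReal_mul (by positivity), Real.mul_rpow (by positivity) (by positivity)]
    congr 1
    ring
  rw [← ENNReal.ofReal_tsum_of_nonneg (fun j => by positivity) (hsum.mul_left _),
    tsum_mul_left] at hbound
  exact ⟨hbound, hsum, hbound.trans_lt ENNReal.ofReal_lt_top⟩
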